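/- Lower tracking bound: Suppose that for all rounds t ≥ 1 the selected action a_t satisfies p_t(a_t) ≤ π(a_t). Then for every action a and every round t ≥ 1, p_t(a) ≥ π(a) − (|𝒜| − 1)/(|𝒜| + t). -/

import Mathlib

/-!
Writing `n_t(b)` for the number of visits of `b` up to round `t`, the selection rule keeps every
count below its target: `n_t(b) ≤ (|𝒜| + t) π(b)`. Indeed this is trivial at `t = 0`, a count that
does not move stays below its growing target, and a count that moves at round `t` satisfies
`n_t(b) + 1 ≤ (|𝒜| + t) π(b)` by the selection rule. Since the counts sum to `t` and `π` sums to
`1`, the count of any single action is then at least `t - (|𝒜| + t)(1 - π(a))`.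
-/

open Finset

namespace Tracking

variable {A : Type*} [DecidableEq A]

def visitCount (act : ℕ → A) (t : ℕ) (a : A) : ℕ :=
  #{i ∈ Icc 1 t | act i = a}

theorem visitCount_succ (act : ℕ → A) (t : ℕ) (a : A) :
    visitCount act (t + 1) a = visitCount act t a + if act (t + 1) = a then 1 else 0 := by
  unfold visitCount
  rw [← insert_Icc_right_eq_Icc_add_one (by omega), filter_insert]
  split_ifs
  · exact card_insert_of_notMem (by simp)
  · rfl

theorem sum_visitCount [Fintype A] (act : ℕ → A) (t : ℕ) : ∑ a, visitCount act t a = t := by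
  simp only [visitCount]
  rw [← card_eq_sum_card_fiberwise (fun _ _ => mem_univ _), Nat.card_Icc,
    Nat.add_sub_cancel]

theorem visitCount_le_of_tracking {act : ℕ → A} {pi : A → ℝ} {c : ℝ} (hc : 0 ≤ c)
    (hpi : ∀ a, 0 ≤ pi a)
    (hsel : ∀ t, 1 ≤ t → (visitCount act t (act t) : ℝ) + 1 ≤ (c + t) * pi (act t))
    (t : ℕ) (a : A) : (visitCount act t a : ℝ) ≤ (c + t) * pi a := by
  induction t with
  | zero => simpa [visitCount] using mul_nonneg hc (hpi a)
  | succ t ih =>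
    by_cases hmove : act (t + 1) = a
    · have h := hsel (t + 1) (by omega)
      rw [hmove] at h
      push_cast at h ⊢
      linarith
    · rw [visitCount_succ, if_neg hmove, add_zero]
      push_cast
      nlinarith [hpi a]

end Tracking

theorem sum_sub_mul_le_of_forall_le_mul {ι : Type*} [Fintype ι] [DecidableEq ι] {n w : ι → ℝ}
    {M : ℝ} (hle : ∀ b, n b ≤ M * w b) (a : ι) : ∑ b, n b - M * (∑ b, w b - w a) ≤ n a := by
  have hrest : ∑ b ∈ univ.erase a, n b ≤ M * ∑ b ∈ univ.erase a, w b := by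
    rw [mul_sum]
    exact sum_le_sum fun b _ => hle b
  rw [← add_sum_erase _ _ (mem_univ a), ← add_sum_erase _ w (mem_univ a)]
  linarith

open Tracking in
theorem tracking_lower_bound_general
    {A : Type*} [Fintype A] [DecidableEq A]
    (pi : A → ℝ) (hpi : ∀ a, 0 ≤ pi a) (hsum : ∑ a, pi a = 1)
    (act : ℕ → A)
    (p : ℕ → A → ℝ)
    (hp : ∀ t a, p t a =
        ((((Finset.Icc 1 t).filter (fun i => act i = a)).card : ℝ) + 1)
          / ((Fintype.card A : ℝ) + t))
    (hsel : ∀ t, 1 ≤ t → p t (act t) ≤ pi (act t)) :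
    ∀ a, ∀ t, 1 ≤ t →
      pi a - ((Fintype.card A : ℝ) - 1) / ((Fintype.card A : ℝ) + t) ≤ p t a := by
  have hp' (t : ℕ) (a : A) : p t a = ((visitCount act t a : ℝ) + 1) / (Fintype.card A + t) :=
    hp t a
  have hpos {t : ℕ} (ht : 1 ≤ t) : (0 : ℝ) < Fintype.card A + t := by positivity
  have hcount := visitCount_le_of_tracking (act := act) (Nat.cast_nonneg (Fintype.card A)) hpi
    fun t ht => by simpa only [hp', div_le_iff₀ (hpos ht), mul_comm] using hsel t ht
  intro a t ht
  have hlower := sum_sub_mul_le_of_forall_le_mul (hcount t) a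
  rw [← Nat.cast_sum, sum_visitCount, hsum] at hlower
  rw [hp', sub_le_iff_le_add, ← add_div, le_div_iff₀ (hpos ht)]
  linarith

/-- Lower tracking bound: if at every round `t ≥ 1` the selected action `a_t` satisfies
`p_t(a_t) ≤ π(a_t)`, then for every action `a` and round `t ≥ 1`,
`p_t(a) ≥ π(a) − (|𝒜| − 1)/(|𝒜| + t)`. -/
theorem tracking_lower_bound
    {A : Type*} [Fintype A] [Nonempty A] [DecidableEq A]
    (pi : A → ℝ) (hpi : ∀ a, 0 ≤ pi a) (hsum : ∑ a, pi a = 1)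
    (act : ℕ → A)
    (p : ℕ → A → ℝ)
    (hp : ∀ t a, p t a =
        ((((Finset.Icc 1 t).filter (fun i => act i = a)).card : ℝ) + 1)
          / ((Fintype.card A : ℝ) + t))
    (hsel : ∀ t, 1 ≤ t → p t (act t) ≤ pi (act t)) :
    ∀ a, ∀ t, 1 ≤ t →
      pi a - ((Fintype.card A : ℝ) - 1) / ((Fintype.card A : ℝ) + t) ≤ p t a :=
  tracking_lower_bound_general pi hpi hsum act p hp hsel
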